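/- arXiv:2406.16205 — 4 statements merged into one kernel-verified Lean document; each statement's English description precedes it below -/
import Mathlib

section
/- Let d_n = det of the (n−2)×(n−2) matrix obtained from the Laplacian of the straight linear 2-tree on n vertices by deleting rows and columns 1 and n. Then d_n satisfies the linear recursion with characteristic polynomial (X+1)(X²−3X+1)² for all n ≥ 7, equivalently the operator (Y+1)(Y²−3Y+1)² in the backward shift annihilates (d_n)_{n≥7}. -/
set_option maxRecDepth 4000


/-- Adjacency of the linear k-tree band graph: `a ~ b` iff `1 ≤ |a - b| ≤ k`. -/
def linAdj (k a b : ℕ) : Bool := decide (a ≠ b ∧ a ≤ b + k ∧ b ≤ a + k)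

/-- Graph Laplacian of the graph on `n` vertices with adjacency `adj`. -/
def lapl (n : ℕ) (adj : ℕ → ℕ → Bool) : Matrix (Fin n) (Fin n) ℚ :=
  fun i j =>
    if i = j then ((Finset.univ.filter (fun l : Fin n => adj i.val l.val = true)).card : ℚ)
    else if adj i.val j.val then -1 else 0

/-- Delete the first and last row and column. -/
def delFirstLast {n : ℕ} (M : Matrix (Fin n) (Fin n) ℚ) :
    Matrix (Fin (n - 2)) (Fin (n - 2)) ℚ :=
  M.submatrix (fun i => ⟨i.val + 1, by have := i.isLt; omega⟩)
    (fun j => ⟨j.val + 1, by have := j.isLt; omega⟩)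

/-- The sequence `x` satisfies, for all `n ≥ N`, the linear recursion with
characteristic polynomial `p = X^k - c₁X^{k-1} - ⋯ - c_k`, i.e.
`x n = c₁ x (n-1) + ⋯ + c_k x (n-k)`. -/
def SatisfiesCharPolyRec (p : Polynomial ℚ) (x : ℕ → ℚ) (N : ℕ) : Prop :=
  ∀ n, N ≤ n →
    ∑ i ∈ Finset.range (p.natDegree + 1), p.coeff i * x (n - (p.natDegree - i)) = 0

/- ## Auxiliary development -/

/-- Tridiagonal Toeplitz matrix with diagonal `d` and off-diagonal `e`. -/
def tri (d e : ℚ) (m : ℕ) : Matrix (Fin m) (Fin m) ℚ :=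
  fun i j => if (i : ℕ) = j then d else if (i:ℕ) + 1 = j ∨ (j:ℕ) + 1 = i then e else 0

/-- Pentadiagonal matrix with corner diagonal entries `a`, `b`, interior diagonal 4,
and `-1` on the four off-diagonals. -/
def pent (a b : ℚ) (m : ℕ) : Matrix (Fin m) (Fin m) ℚ :=
  fun i j =>
    if (i : ℕ) = j then (if (i : ℕ) = m - 1 then b else if (i : ℕ) = 0 then a else 4)
    else if (i : ℕ) ≤ (j : ℕ) + 2 ∧ (j : ℕ) ≤ (i : ℕ) + 2 then -1 else 0

def u : ℕ → ℚ
  | 0 => 1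
  | 1 => 3
  | (n+2) => 3 * u (n+1) - u n

lemma urec (n : ℕ) : u (n+2) = 3 * u (n+1) - u n := rfl

lemma tri_sub00 (d e : ℚ) (m : ℕ) :
    (tri d e (m+2)).submatrix Fin.succ (Fin.succAbove 0) = tri d e (m+1) := by
  ext i j
  simp [tri, Matrix.submatrix, Fin.succAbove_zero, Fin.val_succ]

lemma tri_colzero (d e : ℚ) (m : ℕ) (i : Fin (m+1)) :
    ((tri d e (m+2)).submatrix Fin.succ (Fin.succAbove 1)) i 0
      = if (i:ℕ) = 0 then e else 0 := by
  simp [tri, Matrix.submatrix, Fin.succAbove, Fin.val_succ, Fin.lt_def]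
  split_ifs with h1 h2 h2 <;> first | rfl | exact absurd (Fin.ext h1.symm) h2 | exact absurd (congrArg Fin.val h2).symm h1

lemma tri_sub01 (d e : ℚ) (m : ℕ) :
    (((tri d e (m+2)).submatrix Fin.succ (Fin.succAbove 1)).submatrix (Fin.succAbove 0) Fin.succ)
      = tri d e m := by
  ext i j
  simp [tri, Matrix.submatrix, Fin.succAbove, Fin.val_succ, Fin.lt_def]

lemma tri_rec (d e : ℚ) (m : ℕ) :
    (tri d e (m+2)).det = d * (tri d e (m+1)).det - e^2 * (tri d e m).det := by
  rw [Matrix.det_succ_row_zero]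
  rw [Fin.sum_univ_succ, Fin.sum_univ_succ]
  have h1 : ∑ i : Fin m,
      (-1) ^ ((i.succ.succ : Fin (m+2)) : ℕ) * tri d e (m + 2) 0 i.succ.succ *
        ((tri d e (m + 2)).submatrix Fin.succ i.succ.succ.succAbove).det = 0 := by
    apply Finset.sum_eq_zero
    intro i _
    have : tri d e (m+2) 0 i.succ.succ = 0 := by
      simp [tri, Fin.val_succ]
    rw [this]; ring
  rw [h1, tri_sub00]
  have hone : (Fin.succ 0 : Fin (m+2)) = 1 := rfl
  rw [hone]
  have h2 : ((tri d e (m+2)).submatrix Fin.succ (Fin.succAbove 1)).det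
      = e * (tri d e m).det := by
    rw [Matrix.det_succ_column_zero, Fin.sum_univ_succ]
    have h3 : ∑ i : Fin m,
        (-1) ^ ((i.succ : Fin (m+1)) : ℕ) *
          ((tri d e (m+2)).submatrix Fin.succ (Fin.succAbove 1)) i.succ 0 *
          (((tri d e (m+2)).submatrix Fin.succ (Fin.succAbove 1)).submatrix i.succ.succAbove
            Fin.succ).det = 0 := by
      apply Finset.sum_eq_zero
      intro i _
      rw [tri_colzero]
      simp [Fin.val_succ]
    rw [h3, tri_colzero, tri_sub01]
    simp
  rw [h2]
  have e00 : tri d e (m+2) 0 0 = d := by simp [tri]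
  have e01 : tri d e (m+2) 0 1 = e := by simp [tri, Fin.val_one]
  rw [e00, e01]
  simp
  ring

lemma det_triU (m : ℕ) : (tri 3 1 m).det = u m := by
  induction m using Nat.strong_induction_on with
  | _ m ih =>
    match m with
    | 0 => simp [u]
    | 1 => simp [u, tri, Matrix.det_fin_one]
    | (n+2) =>
      rw [tri_rec, ih (n+1) (by omega), ih n (by omega), u]
      ring

lemma det_triV (m : ℕ) : (tri 2 (-1) m).det = (m + 1 : ℚ) := by
  induction m using Nat.strong_induction_on with
  | _ m ih =>
    match m with
    | 0 => simp
    | 1 => simp [tri, Matrix.det_fin_one]; norm_num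
    | (n+2) =>
      rw [tri_rec, ih (n+1) (by omega), ih n (by omega)]
      push_cast
      ring

lemma sum_delta {n : ℕ} (c : ℕ) (F : Fin n → ℚ) :
    ∑ k : Fin n, (if (k:ℕ) = c then F k else 0) = if h : c < n then F ⟨c, h⟩ else 0 := by
  split_ifs with h
  · rw [Finset.sum_eq_single ⟨c, h⟩]
    · simp
    · intro k _ hk
      rw [if_neg]
      simpa [Fin.ext_iff] using hk
    · simp
  · apply Finset.sum_eq_zero
    intro k _
    rw [if_neg]
    exact fun hc => h (hc ▸ k.isLt)

lemma mul_tri (m : ℕ) : tri 3 1 (m+2) * tri 2 (-1) (m+2) = pent 5 5 (m+2) := by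
  ext i j
  rw [Matrix.mul_apply]
  have hsplit : ∀ k : Fin (m+2), tri 3 1 (m+2) i k * tri 2 (-1) (m+2) k j
      = (if (k:ℕ) = (i:ℕ) then 3 * tri 2 (-1) (m+2) k j else 0)
        + (if (k:ℕ) = (i:ℕ)+1 then tri 2 (-1) (m+2) k j else 0)
        + (if (k:ℕ) = (i:ℕ)-1 ∧ 0 < (i:ℕ) then tri 2 (-1) (m+2) k j else 0) := by
    intro k
    simp only [tri]
    split_ifs <;> try omega
    all_goals ring
  rw [Finset.sum_congr rfl (fun k _ => hsplit k)]
  rw [Finset.sum_add_distrib, Finset.sum_add_distrib, sum_delta, sum_delta]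
  have h3 : ∑ k : Fin (m+2), (if (k:ℕ) = (i:ℕ)-1 ∧ 0 < (i:ℕ) then tri 2 (-1) (m+2) k j else 0)
      = if h : 0 < (i:ℕ) then tri 2 (-1) (m+2) ⟨(i:ℕ)-1, by omega⟩ j else 0 := by
    by_cases hi : 0 < (i:ℕ)
    · simp only [hi, and_true, dif_pos]
      rw [sum_delta ((i:ℕ)-1) (fun k => tri 2 (-1) (m+2) k j), dif_pos (by omega)]
    · simp [hi]
  rw [h3]
  have hi2 : (i:ℕ) < m + 2 := i.isLt
  have hj2 : (j:ℕ) < m + 2 := j.isLt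
  rw [dif_pos hi2]
  by_cases h1 : (i:ℕ)+1 < m+2 <;> by_cases h2 : 0 < (i:ℕ) <;>
    simp only [h1, h2, dif_pos, dif_neg, not_lt, not_true, dite_true, dite_false] <;>
    · simp only [tri, pent, Fin.eta]
      split_ifs <;> first | omega | norm_num

lemma pent_rev (a b : ℚ) (m : ℕ) :
    (pent a b (m+2)).det = (pent b a (m+2)).det := by
  have h : pent b a (m+2) = (pent a b (m+2)).submatrix Fin.revPerm Fin.revPerm := by
    ext i j
    simp only [Matrix.submatrix_apply, pent, Fin.revPerm_apply, Fin.val_rev]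
    split_ifs <;> first | rfl | omega
  rw [h, Matrix.det_submatrix_equiv_self]

lemma pent_corner (a b : ℚ) (m : ℕ) :
    (pent a b (m+2)).det = (pent 5 b (m+2)).det + (a - 5) * (pent 4 b (m+1)).det := by
  have hrow : pent a b (m+2) = (pent 5 b (m+2)).updateRow 0
      (pent 5 b (m+2) 0 + (a - 5) • (fun j : Fin (m+2) => if (j:ℕ) = 0 then (1:ℚ) else 0)) := by
    ext i j
    by_cases hi : i = 0
    · subst hi
      rw [Matrix.updateRow_self]
      simp only [pent, Pi.add_apply, Pi.smul_apply, smul_eq_mul, Fin.val_zero, eq_comm (a := (0:ℕ))]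
      split_ifs <;> first | omega | ring
    · have hi' : (i:ℕ) ≠ 0 := by exact fun h => hi (Fin.ext h)
      rw [Matrix.updateRow_ne hi]
      simp only [pent]
      split_ifs <;> first | rfl | omega
  rw [hrow, Matrix.det_updateRow_add, Matrix.det_updateRow_smul, Matrix.updateRow_eq_self]
  congr 2
  rw [Matrix.det_succ_row_zero, Fin.sum_univ_succ]
  have hz : ∑ j : Fin (m+1),
      (-1) ^ ((j.succ : Fin (m+2)) : ℕ) *
        ((pent 5 b (m+2)).updateRow 0 fun j : Fin (m+2) => if (j:ℕ) = 0 then (1:ℚ) else 0) 0 j.succ *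
        (((pent 5 b (m+2)).updateRow 0 fun j : Fin (m+2) => if (j:ℕ) = 0 then (1:ℚ) else 0).submatrix
          Fin.succ j.succ.succAbove).det = 0 := by
    apply Finset.sum_eq_zero
    intro k _
    rw [Matrix.updateRow_self]
    simp [Fin.val_succ]
  rw [hz, Matrix.updateRow_self]
  have hsub : (((pent 5 b (m+2)).updateRow 0 fun j : Fin (m+2) => if (j:ℕ) = 0 then (1:ℚ) else 0).submatrix
      Fin.succ (Fin.succAbove 0)) = pent 4 b (m+1) := by
    ext i j
    rw [Fin.succAbove_zero]
    simp only [Matrix.submatrix_apply]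
    rw [Matrix.updateRow_ne (Fin.succ_ne_zero i)]
    simp only [pent, Fin.val_succ]
    split_ifs <;> first | rfl | omega | simp_all
  rw [hsub]
  simp

lemma c_val (m : ℕ) : (pent 5 5 (m+2)).det = (m+3 : ℚ) * u (m+2) := by
  rw [← mul_tri, Matrix.det_mul, det_triU, det_triV]
  push_cast; ring

lemma det2 (a b : ℚ) : (pent a b 2).det = a * b - 1 := by
  rw [Matrix.det_fin_two]
  simp [pent]

lemma g_val (m : ℕ) :
    (pent 5 4 (m+2)).det = ((m+4 : ℚ) * u (m+2) + (m+3 : ℚ) * u (m+3)) / 5 := by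
  induction m with
  | zero => rw [det2]; norm_num [u]
  | succ n ih =>
    have h1 : (pent 5 4 (n+3)).det = (pent 4 5 (n+3)).det := pent_rev 5 4 (n+1)
    have h2 : (pent 4 5 (n+3)).det
        = (pent 5 5 (n+3)).det + (4 - 5) * (pent 4 5 (n+2)).det := pent_corner 4 5 (n+1)
    have h3 : (pent 4 5 (n+2)).det = (pent 5 4 (n+2)).det := pent_rev 4 5 n
    rw [show n+1+2 = n+3 from rfl, h1, h2, h3, ih, c_val (n+1),
      show n+1+2 = n+3 from rfl, show n+1+3 = n+4 from rfl, urec (n+2)]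
    push_cast; ring

lemma h_val (m : ℕ) :
    (pent 5 3 (m+2)).det = ((-3*m-7 : ℚ) * u (m+2) + (2*m+6 : ℚ) * u (m+3)) / 5 := by
  cases m with
  | zero => rw [det2]; norm_num [u]
  | succ n =>
    have h1 : (pent 5 3 (n+3)).det = (pent 3 5 (n+3)).det := pent_rev 5 3 (n+1)
    have h2 : (pent 3 5 (n+3)).det
        = (pent 5 5 (n+3)).det + (3 - 5) * (pent 4 5 (n+2)).det := pent_corner 3 5 (n+1)
    have h3 : (pent 4 5 (n+2)).det = (pent 5 4 (n+2)).det := pent_rev 4 5 n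
    rw [show n+1+2 = n+3 from rfl, h1, h2, h3, g_val n, c_val (n+1),
      show n+1+2 = n+3 from rfl, show n+1+3 = n+4 from rfl, urec (n+2)]
    push_cast; ring

lemma k_val (m : ℕ) :
    (pent 4 3 (m+2)).det
      = ((-5*m-16 : ℚ) * u (m+2) + (5*m+19 : ℚ) * u (m+3) + 4*(-1:ℚ)^m) / 25 := by
  induction m with
  | zero => rw [det2]; norm_num [u]
  | succ n ih =>
    have h2 : (pent 4 3 (n+3)).det
        = (pent 5 3 (n+3)).det + (4 - 5) * (pent 4 3 (n+2)).det := pent_corner 4 3 (n+1)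
    rw [show n+1+2 = n+3 from rfl, h2, ih, h_val (n+1),
      show n+1+2 = n+3 from rfl, show n+1+3 = n+4 from rfl, urec (n+2), pow_succ]
    push_cast; ring

lemma B_val (m : ℕ) :
    (pent 3 3 (m+2)).det
      = ((5*m+3 : ℚ) * u (m+2) + 8 * u (m+3) + 8*(-1:ℚ)^m) / 25 := by
  cases m with
  | zero => rw [det2]; norm_num [u]
  | succ n =>
    have h2 : (pent 3 3 (n+3)).det
        = (pent 5 3 (n+3)).det + (3 - 5) * (pent 4 3 (n+2)).det := pent_corner 3 3 (n+1)
    rw [show n+1+2 = n+3 from rfl, h2, k_val n, h_val (n+1),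
      show n+1+2 = n+3 from rfl, show n+1+3 = n+4 from rfl, urec (n+2), pow_succ]
    push_cast; ring

lemma B_rec (m : ℕ) :
    (pent 3 3 (m+7)).det
      = 5 * (pent 3 3 (m+6)).det - 5 * (pent 3 3 (m+5)).det - 5 * (pent 3 3 (m+4)).det
        + 5 * (pent 3 3 (m+3)).det - (pent 3 3 (m+2)).det := by
  have b0 := B_val m
  have b1 : (pent 3 3 (m+3)).det
      = ((5*((m+1:ℕ):ℚ)+3) * u (m+3) + 8 * u (m+4) + 8*(-1:ℚ)^(m+1)) / 25 := B_val (m+1)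
  have b2 : (pent 3 3 (m+4)).det
      = ((5*((m+2:ℕ):ℚ)+3) * u (m+4) + 8 * u (m+5) + 8*(-1:ℚ)^(m+2)) / 25 := B_val (m+2)
  have b3 : (pent 3 3 (m+5)).det
      = ((5*((m+3:ℕ):ℚ)+3) * u (m+5) + 8 * u (m+6) + 8*(-1:ℚ)^(m+3)) / 25 := B_val (m+3)
  have b4 : (pent 3 3 (m+6)).det
      = ((5*((m+4:ℕ):ℚ)+3) * u (m+6) + 8 * u (m+7) + 8*(-1:ℚ)^(m+4)) / 25 := B_val (m+4)
  have b5 : (pent 3 3 (m+7)).det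
      = ((5*((m+5:ℕ):ℚ)+3) * u (m+7) + 8 * u (m+8) + 8*(-1:ℚ)^(m+5)) / 25 := B_val (m+5)
  have r6 : u (m+8) = 3 * u (m+7) - u (m+6) := urec (m+6)
  have r5 : u (m+7) = 3 * u (m+6) - u (m+5) := urec (m+5)
  have r4 : u (m+6) = 3 * u (m+5) - u (m+4) := urec (m+4)
  have r3 : u (m+5) = 3 * u (m+4) - u (m+3) := urec (m+3)
  have r2 : u (m+4) = 3 * u (m+3) - u (m+2) := urec (m+2)
  rw [b0, b1, b2, b3, b4, b5, r6, r5, r4, r3, r2]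
  simp only [pow_add, pow_succ, pow_zero]
  push_cast; ring

lemma deg_card (m : ℕ) (v : ℕ) (h1 : 1 ≤ v) (h2 : v ≤ m + 2) :
    (Finset.univ.filter (fun l : Fin (m+4) => linAdj 2 v l.val = true)).card
      = if v = 1 ∨ v = m + 2 then 3 else 4 := by
  by_cases hv1 : v = 1
  · subst hv1
    have hset : (Finset.univ.filter (fun l : Fin (m+4) => linAdj 2 1 l.val = true))
        = {(⟨0, by omega⟩ : Fin (m+4)), ⟨2, by omega⟩, ⟨3, by omega⟩} := by
      ext l
      simp only [Finset.mem_filter, Finset.mem_univ, true_and, Finset.mem_insert,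
        Finset.mem_singleton, linAdj, decide_eq_true_eq, Fin.ext_iff]
      omega
    rw [hset, if_pos (Or.inl rfl)]
    rw [Finset.card_insert_of_notMem (by simp [Fin.ext_iff]),
      Finset.card_insert_of_notMem (by simp [Fin.ext_iff]), Finset.card_singleton]
  · by_cases hv2 : v = m + 2
    · subst hv2
      have hset : (Finset.univ.filter (fun l : Fin (m+4) => linAdj 2 (m+2) l.val = true))
          = {(⟨m, by omega⟩ : Fin (m+4)), ⟨m+1, by omega⟩, ⟨m+3, by omega⟩} := by
        ext l
        simp only [Finset.mem_filter, Finset.mem_univ, true_and, Finset.mem_insert,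
          Finset.mem_singleton, linAdj, decide_eq_true_eq, Fin.ext_iff]
        omega
      rw [hset, if_pos (Or.inr rfl)]
      rw [Finset.card_insert_of_notMem (by simp [Fin.ext_iff] <;> omega),
        Finset.card_insert_of_notMem (by simp [Fin.ext_iff] <;> omega), Finset.card_singleton]
    · have hset : (Finset.univ.filter (fun l : Fin (m+4) => linAdj 2 v l.val = true))
          = {(⟨v-2, by omega⟩ : Fin (m+4)), ⟨v-1, by omega⟩, ⟨v+1, by omega⟩,
              ⟨v+2, by omega⟩} := by
        ext l
        simp only [Finset.mem_filter, Finset.mem_univ, true_and, Finset.mem_insert,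
          Finset.mem_singleton, linAdj, decide_eq_true_eq, Fin.ext_iff]
        omega
      rw [hset, if_neg (by omega)]
      rw [Finset.card_insert_of_notMem (by simp [Fin.ext_iff] <;> omega),
        Finset.card_insert_of_notMem (by simp [Fin.ext_iff] <;> omega),
        Finset.card_insert_of_notMem (by simp [Fin.ext_iff] <;> omega), Finset.card_singleton]

lemma lapl_eq_pent (m : ℕ) :
    delFirstLast (lapl (m+4) (linAdj 2)) = pent 3 3 (m+2) := by
  ext i j
  have hi := i.isLt
  have hj := j.isLt
  simp only [delFirstLast, Matrix.submatrix_apply, lapl]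
  by_cases hij : (i : ℕ) = (j : ℕ)
  · rw [if_pos (by simp [Fin.ext_iff, hij])]
    rw [deg_card m ((i:ℕ)+1) (by omega) (by omega)]
    simp only [pent, if_pos hij]
    split_ifs <;> (try norm_num) <;> omega
  · rw [if_neg (by simp [Fin.ext_iff]; omega)]
    simp only [pent, if_neg hij, linAdj, decide_eq_true_eq]
    split_ifs <;> first | rfl | omega

open Polynomial in
lemma p_expand : ((X + 1) * (X ^ 2 - 3 * X + 1) ^ 2 : ℚ[X])
    = X^5 - C 5 * X^4 + C 5 * X^3 + C 5 * X^2 - C 5 * X + C 1 := by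
  have h5 : (C 5 : ℚ[X]) = 5 := map_ofNat C 5
  have h1 : (C 1 : ℚ[X]) = 1 := map_one C
  rw [h5, h1]
  ring

open Polynomial in
lemma p_natDegree : ((X + 1) * (X ^ 2 - 3 * X + 1) ^ 2 : ℚ[X]).natDegree = 5 := by
  rw [p_expand]
  compute_degree!

open Polynomial in
lemma p_coeffs : ((X + 1) * (X ^ 2 - 3 * X + 1) ^ 2 : ℚ[X]).coeff 0 = 1
    ∧ ((X + 1) * (X ^ 2 - 3 * X + 1) ^ 2 : ℚ[X]).coeff 1 = -5
    ∧ ((X + 1) * (X ^ 2 - 3 * X + 1) ^ 2 : ℚ[X]).coeff 2 = 5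
    ∧ ((X + 1) * (X ^ 2 - 3 * X + 1) ^ 2 : ℚ[X]).coeff 3 = 5
    ∧ ((X + 1) * (X ^ 2 - 3 * X + 1) ^ 2 : ℚ[X]).coeff 4 = -5
    ∧ ((X + 1) * (X ^ 2 - 3 * X + 1) ^ 2 : ℚ[X]).coeff 5 = 1 := by
  refine ⟨?_, ?_, ?_, ?_, ?_, ?_⟩ <;> rw [p_expand] <;> simp [coeff_one]

lemma D3 : (delFirstLast (lapl 3 (linAdj 2))).det = 2 := by
  rw [Matrix.det_fin_one]
  simp only [delFirstLast, Matrix.submatrix_apply, lapl]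
  norm_num
  norm_cast

lemma urec' (n : ℕ) : u (n+2) = 3 * u (n+1) - u n := rfl
lemma u0 : u 0 = 1 := rfl
lemma u1 : u 1 = 3 := rfl
lemma u2 : u 2 = 8 := by
  have h : u 2 = 3 * u 1 - u 0 := urec' 0; rw [u1, u0] at h; norm_num at h; exact h
lemma u3 : u 3 = 21 := by
  have h : u 3 = 3 * u 2 - u 1 := urec' 1; rw [u2, u1] at h; norm_num at h; exact h
lemma u4 : u 4 = 55 := by
  have h : u 4 = 3 * u 3 - u 2 := urec' 2; rw [u3, u2] at h; norm_num at h; exact h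
lemma u5 : u 5 = 144 := by
  have h : u 5 = 3 * u 4 - u 3 := urec' 3; rw [u4, u3] at h; norm_num at h; exact h
lemma u6 : u 6 = 377 := by
  have h : u 6 = 3 * u 5 - u 4 := urec' 4; rw [u5, u4] at h; norm_num at h; exact h
lemma u7 : u 7 = 987 := by
  have h : u 7 = 3 * u 6 - u 5 := urec' 5; rw [u6, u5] at h; norm_num at h; exact h

lemma Dval (m : ℕ) : (delFirstLast (lapl (m+4) (linAdj 2))).det
    = ((5*(m:ℚ)+3) * u (m+2) + 8 * u (m+3) + 8*(-1:ℚ)^m) / 25 :=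
  (congrArg Matrix.det (lapl_eq_pent m)).trans (B_val m)

lemma Dcongr (k l : ℕ) (h : k = l) :
    (delFirstLast (lapl k (linAdj 2))).det = (delFirstLast (lapl l (linAdj 2))).det := by
  subst h; rfl

lemma D2 : (delFirstLast (lapl 2 (linAdj 2))).det = 1 := Matrix.det_fin_zero

lemma D4 : (delFirstLast (lapl 4 (linAdj 2))).det = 8 := by
  have hv : ((5*((0:ℕ):ℚ)+3) * u (0+2) + 8 * u (0+3) + 8*(-1:ℚ)^0)/25 = 8 := by
    rw [show u (0+2) = 8 from u2, show u (0+3) = 21 from u3]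
    norm_num
  exact (Dcongr 4 (0+4) (by norm_num)).trans ((Dval 0).trans hv)

lemma D5 : (delFirstLast (lapl 5 (linAdj 2))).det = 24 := by
  have hv : ((5*((1:ℕ):ℚ)+3) * u (1+2) + 8 * u (1+3) + 8*(-1:ℚ)^1)/25 = 24 := by
    rw [show u (1+2) = 21 from u3, show u (1+3) = 55 from u4]
    norm_num
  exact (Dcongr 5 (1+4) (by norm_num)).trans ((Dval 1).trans hv)

lemma D6 : (delFirstLast (lapl 6 (linAdj 2))).det = 75 := by
  have hv : ((5*((2:ℕ):ℚ)+3) * u (2+2) + 8 * u (2+3) + 8*(-1:ℚ)^2)/25 = 75 := by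
    rw [show u (2+2) = 55 from u4, show u (2+3) = 144 from u5]
    norm_num
  exact (Dcongr 6 (2+4) (by norm_num)).trans ((Dval 2).trans hv)

lemma D7 : (delFirstLast (lapl 7 (linAdj 2))).det = 224 := by
  have hv : ((5*((3:ℕ):ℚ)+3) * u (3+2) + 8 * u (3+3) + 8*(-1:ℚ)^3)/25 = 224 := by
    rw [show u (3+2) = 144 from u5, show u (3+3) = 377 from u6]
    norm_num
  exact (Dcongr 7 (3+4) (by norm_num)).trans ((Dval 3).trans hv)

lemma D8 : (delFirstLast (lapl 8 (linAdj 2))).det = 663 := by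
  have hv : ((5*((4:ℕ):ℚ)+3) * u (4+2) + 8 * u (4+3) + 8*(-1:ℚ)^4)/25 = 663 := by
    rw [show u (4+2) = 377 from u6, show u (4+3) = 987 from u7]
    norm_num
  exact (Dcongr 8 (4+4) (by norm_num)).trans ((Dval 4).trans hv)

open Polynomial in
/-- The determinants `d_n = det(L({1,n}|{1,n}))` for the straight linear 2-tree
on `n` vertices satisfy, for all `n ≥ 7`, the linear recursion with
characteristic polynomial `(X+1)(X²-3X+1)²`; equivalently `(Y+1)(Y²-3Y+1)²`
annihilates `(d_n)_{n ≥ 7}`. -/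
theorem stmt5 :
    SatisfiesCharPolyRec ((X + 1) * (X ^ 2 - 3 * X + 1) ^ 2)
      (fun n => (delFirstLast (lapl n (linAdj 2))).det) 7 := by
  obtain ⟨c0, c1, c2, c3, c4, c5⟩ := p_coeffs
  intro n hn
  rw [p_natDegree]
  rw [Finset.sum_range_succ, Finset.sum_range_succ, Finset.sum_range_succ,
    Finset.sum_range_succ, Finset.sum_range_succ, Finset.sum_range_succ,
    Finset.sum_range_zero]
  rw [c0, c1, c2, c3, c4, c5]
  norm_num
  rcases Nat.lt_or_ge n 9 with h9 | h9
  · interval_cases n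
    · rw [Dcongr (7-(5-0)) 2 (by norm_num), Dcongr (7-(5-1)) 3 (by norm_num),
        Dcongr (7-(5-2)) 4 (by norm_num), Dcongr (7-(5-3)) 5 (by norm_num),
        Dcongr (7-(5-4)) 6 (by norm_num), Dcongr (7-(5-5)) 7 (by norm_num),
        D2, D3, D4, D5, D6, D7]
      norm_num
    · rw [Dcongr (8-(5-0)) 3 (by norm_num), Dcongr (8-(5-1)) 4 (by norm_num),
        Dcongr (8-(5-2)) 5 (by norm_num), Dcongr (8-(5-3)) 6 (by norm_num),
        Dcongr (8-(5-4)) 7 (by norm_num), Dcongr (8-(5-5)) 8 (by norm_num),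
        D3, D4, D5, D6, D7, D8]
      norm_num
  · obtain ⟨m, rfl⟩ : ∃ m, n = m + 9 := ⟨n - 9, by omega⟩
    rw [Dcongr (m+9-(5-0)) (m+4) (by omega), Dcongr (m+9-(5-1)) (m+5) (by omega),
      Dcongr (m+9-(5-2)) (m+6) (by omega), Dcongr (m+9-(5-3)) (m+7) (by omega),
      Dcongr (m+9-(5-4)) (m+8) (by omega), Dcongr (m+9-(5-5)) (m+9) (by omega)]
    have e4 : (delFirstLast (lapl (m+4) (linAdj 2))).det = (pent 3 3 (m+2)).det :=
      congrArg Matrix.det (lapl_eq_pent m)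
    have e5 : (delFirstLast (lapl (m+5) (linAdj 2))).det = (pent 3 3 (m+3)).det :=
      congrArg Matrix.det (lapl_eq_pent (m+1))
    have e6 : (delFirstLast (lapl (m+6) (linAdj 2))).det = (pent 3 3 (m+4)).det :=
      congrArg Matrix.det (lapl_eq_pent (m+2))
    have e7 : (delFirstLast (lapl (m+7) (linAdj 2))).det = (pent 3 3 (m+5)).det :=
      congrArg Matrix.det (lapl_eq_pent (m+3))
    have e8 : (delFirstLast (lapl (m+8) (linAdj 2))).det = (pent 3 3 (m+6)).det :=
      congrArg Matrix.det (lapl_eq_pent (m+4))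
    have e9 : (delFirstLast (lapl (m+9) (linAdj 2))).det = (pent 3 3 (m+7)).det :=
      congrArg Matrix.det (lapl_eq_pent (m+5))
    rw [e4, e5, e6, e7, e8, e9]
    linarith [B_rec m]
end

section
/- In the wheel graph on k vertices, the resistance distance between the hub vertex k and any rim vertex i ∈ {1,...,k−1} equals F_{2k−2}² / (F_{4k−4} − 2F_{2k−2}), where F_j is the j-th Fibonacci number. -/
/-- Adjacency of the wheel graph on `n` vertices (indices `0, …, n-1`, index `a`
standing for the paper's vertex `a+1`): a cycle on `0, …, n-2` together with the
hub `n-1` joined to every cycle vertex. -/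
def wheelAdj (n a b : ℕ) : Bool :=
  decide (((a + 1 = b ∨ b + 1 = a ∨ (a = 0 ∧ b = n - 2) ∨ (b = 0 ∧ a = n - 2)) ∧
      a ≠ b ∧ a < n - 1 ∧ b < n - 1) ∨
    (a = n - 1 ∧ b < n - 1) ∨ (b = n - 1 ∧ a < n - 1))

/-!
Deleting the hub from the Laplacian of the wheel leaves `3I - A(Cₙ)`, where `Cₙ` is the rim cycle
(`n = k - 1`); deleting a rim vertex as well leaves, after a rotation of the rim, `3I - A(Pₙ₋₁)`
for a path. Expanding along the first row gives
`det(3I - A(Pₙ₊₂)) = 3 det(3I - A(Pₙ₊₁)) - det(3I - A(Pₙ))`, so `det(3I - A(Pₙ)) = F_{2n+2}`,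
while the two corner entries of the cycle contribute `det(3I - A(Cₙ)) = 3F_{2n} - 2F_{2n-2} - 2`.
The claim then reduces to `F_{4n} = F_{2n} (3F_{2n} - 2F_{2n-2})`.
-/

open SimpleGraph Matrix

instance instDecidableRelPathGraphAdj (n : ℕ) : DecidableRel (pathGraph n).Adj :=
  fun _ _ => decidable_of_iff' _ pathGraph_adj

theorem SimpleGraph.cycleGraph_adj_iff_val {n : ℕ} {u v : Fin (n + 2)} :
    (cycleGraph (n + 2)).Adj u v ↔
      (u : ℕ) + 1 = v ∨ (v : ℕ) + 1 = u ∨ ((u : ℕ) = 0 ∧ (v : ℕ) = n + 1) ∨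
        ((v : ℕ) = 0 ∧ (u : ℕ) = n + 1) := by
  simp only [cycleGraph_adj, sub_eq_iff_eq_add', Fin.ext_iff, Fin.val_add_one, Fin.val_last]
  have := u.isLt; have := v.isLt
  split_ifs <;> omega

section

variable {R : Type*} [CommRing R]

theorem Matrix.det_succ_row_zero_of_support {n : ℕ} (A : Matrix (Fin (n + 1)) (Fin (n + 1)) R)
    (s : Finset (Fin (n + 1))) (h : ∀ j ∉ s, A 0 j = 0) :
    A.det = ∑ j ∈ s, (-1) ^ (j : ℕ) * A 0 j * (A.submatrix Fin.succ j.succAbove).det := by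
  rw [det_succ_row_zero]
  exact (Finset.sum_subset (Finset.subset_univ s) fun j _ hj => by simp [h j hj]).symm

theorem Matrix.det_succ_column_zero_of_support {n : ℕ} (A : Matrix (Fin (n + 1)) (Fin (n + 1)) R)
    (s : Finset (Fin (n + 1))) (h : ∀ i ∉ s, A i 0 = 0) :
    A.det = ∑ i ∈ s, (-1) ^ (i : ℕ) * A i 0 * (A.submatrix i.succAbove Fin.succ).det := by
  rw [det_succ_column_zero]
  exact (Finset.sum_subset (Finset.subset_univ s) fun i _ hi => by simp [h i hi]).symm

theorem Matrix.det_eq_pow_of_isUpperTriangular {n : ℕ} {M : Matrix (Fin n) (Fin n) R}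
    (hM : M.IsUpperTriangular) {c : R} (hc : ∀ i, M i i = c) : M.det = c ^ n := by
  simp [det_of_isUpperTriangular hM, hc]

theorem Matrix.det_eq_pow_of_isLowerTriangular {n : ℕ} {M : Matrix (Fin n) (Fin n) R}
    (hM : M.IsLowerTriangular) {c : R} (hc : ∀ i, M i i = c) : M.det = c ^ n := by
  simp [det_of_isLowerTriangular M hM, hc]

theorem Matrix.det_submatrix_eq_of_range_eq {m n : Type*} [Fintype m] [DecidableEq m]
    (A : Matrix n n R) {f g : m → n} (hf : Function.Injective f) (hg : Function.Injective g)
    (h : Set.range f = Set.range g) : (A.submatrix f f).det = (A.submatrix g g).det := by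
  let e : m ≃ m :=
    (Equiv.ofInjective f hf).trans ((Equiv.setCongr h).trans (Equiv.ofInjective g hg).symm)
  have hfg : f = g ∘ e := funext fun x => by simp [e, Equiv.apply_ofInjective_symm]
  rw [hfg, ← submatrix_submatrix, det_submatrix_equiv_self]

theorem SimpleGraph.smul_one_sub_adjMatrix_apply {V : Type*} [DecidableEq V] (G : SimpleGraph V)
    [DecidableRel G.Adj] (d : R) (i j : V) :
    (d • 1 - G.adjMatrix R) i j = if i = j then d else if G.Adj i j then -1 else 0 := by
  by_cases h : i = j
  · subst h; simp
  · rw [Matrix.sub_apply, Matrix.smul_apply, one_apply_ne h, adjMatrix_apply, if_neg h]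
    split_ifs <;> simp

theorem Nat.cast_fib_add_two (n : ℕ) : (Nat.fib (n + 2) : R) = Nat.fib n + Nat.fib (n + 1) := by
  rw [Nat.fib_add_two, Nat.cast_add]

theorem Nat.cast_fib_two_mul_add_four (n : ℕ) :
    (Nat.fib (2 * (n + 2)) : R) = Nat.fib (n + 2) * (3 * Nat.fib (n + 2) - 2 * Nat.fib n) := by
  rw [show 2 * (n + 2) = n + 1 + (n + 2) + 1 by ring, Nat.fib_add]
  push_cast
  linear_combination (Nat.fib (n + 2) : R) * Nat.cast_fib_add_two (R := R) (n + 1) -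
    2 * (Nat.fib (n + 2) : R) * Nat.cast_fib_add_two (R := R) n

noncomputable def pathMatrix (d : R) (n : ℕ) : Matrix (Fin n) (Fin n) R :=
  d • 1 - (pathGraph n).adjMatrix R

theorem pathMatrix_apply (d : R) {n : ℕ} (i j : Fin n) :
    pathMatrix d n i j =
      if (i : ℕ) = j then d else if (i : ℕ) + 1 = j ∨ (j : ℕ) + 1 = i then -1 else 0 := by
  rw [pathMatrix, smul_one_sub_adjMatrix_apply]
  exact if_congr Fin.ext_iff rfl (if_congr pathGraph_adj rfl rfl)

theorem pathMatrix_apply_eq_zero (d : R) {n : ℕ} {i j : Fin n}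
    (h : (i : ℕ) + 1 < j ∨ (j : ℕ) + 1 < i) : pathMatrix d n i j = 0 := by
  rw [pathMatrix_apply, if_neg (by omega), if_neg (by omega)]

theorem pathMatrix_submatrix_succ (d : R) (n : ℕ) :
    (pathMatrix d (n + 1)).submatrix Fin.succ Fin.succ = pathMatrix d n := by
  ext i j
  simp only [submatrix_apply, pathMatrix_apply, Fin.val_succ]
  exact if_congr (by omega) rfl (if_congr (by omega) rfl rfl)

theorem det_pathMatrix_add_two (d : R) (n : ℕ) :
    (pathMatrix d (n + 2)).det = d * (pathMatrix d (n + 1)).det - (pathMatrix d n).det := by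
  set P := pathMatrix d (n + 2)
  have hminor : (P.submatrix Fin.succ (Fin.succAbove 1)).det = -(pathMatrix d n).det := by
    rw [det_succ_column_zero_of_support _ {0} fun i hi => ?_, Finset.sum_singleton,
      submatrix_submatrix, Fin.succAbove_zero]
    · have hsucc : Fin.succAbove 1 ∘ Fin.succ = Fin.succ ∘ (Fin.succ : Fin n → Fin (n + 1)) :=
        funext Fin.one_succAbove_succ
      rw [hsucc, ← submatrix_submatrix, pathMatrix_submatrix_succ, pathMatrix_submatrix_succ]
      simp [P, pathMatrix_apply]
    · rcases i with ⟨i, hi'⟩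
      simp only [Finset.mem_singleton, Fin.ext_iff, Fin.val_zero] at hi
      exact pathMatrix_apply_eq_zero d
        (by simp only [Fin.succ_mk, Fin.one_succAbove_zero, Fin.val_zero]; omega)
  rw [det_succ_row_zero_of_support P {0, 1} fun j hj => ?_, Finset.sum_pair zero_ne_one,
    hminor, Fin.succAbove_zero, pathMatrix_submatrix_succ]
  · simp [P, pathMatrix_apply, sub_eq_add_neg]
  · rcases j with ⟨j, hj'⟩
    simp only [Finset.mem_insert, Finset.mem_singleton, Fin.ext_iff, Fin.val_zero, Fin.val_one]
      at hj
    exact pathMatrix_apply_eq_zero d (by simp only [Fin.val_zero]; omega)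

theorem det_pathMatrix_three : ∀ n : ℕ, (pathMatrix (3 : R) n).det = Nat.fib (2 * n + 2)
  | 0 => by simp
  | 1 => by simp [pathMatrix_apply, Nat.fib_add_two]
  | n + 2 => by
    rw [det_pathMatrix_add_two, det_pathMatrix_three n, det_pathMatrix_three (n + 1)]
    linear_combination -Nat.cast_fib_add_two (R := R) (2 * n + 4) -
      Nat.cast_fib_add_two (R := R) (2 * n + 3) + Nat.cast_fib_add_two (R := R) (2 * n + 2)

noncomputable def cycleMatrix (d : R) (n : ℕ) : Matrix (Fin n) (Fin n) R :=
  d • 1 - (cycleGraph n).adjMatrix R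

theorem cycleMatrix_apply (d : R) {n : ℕ} (i j : Fin (n + 2)) :
    cycleMatrix d (n + 2) i j =
      if (i : ℕ) = j then d
      else if (i : ℕ) + 1 = j ∨ (j : ℕ) + 1 = i ∨ ((i : ℕ) = 0 ∧ (j : ℕ) = n + 1) ∨
        ((j : ℕ) = 0 ∧ (i : ℕ) = n + 1) then -1
      else 0 := by
  rw [cycleMatrix, smul_one_sub_adjMatrix_apply]
  exact if_congr Fin.ext_iff rfl (if_congr cycleGraph_adj_iff_val rfl rfl)

theorem cycleMatrix_apply_eq_zero (d : R) {n : ℕ} {i j : Fin (n + 2)}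
    (h : ¬((i : ℕ) = j ∨ (i : ℕ) + 1 = j ∨ (j : ℕ) + 1 = i ∨ ((i : ℕ) = 0 ∧ (j : ℕ) = n + 1) ∨
      ((j : ℕ) = 0 ∧ (i : ℕ) = n + 1))) : cycleMatrix d (n + 2) i j = 0 := by
  rw [cycleMatrix_apply, if_neg (by omega), if_neg (by omega)]

theorem cycleMatrix_submatrix_succ (d : R) (n : ℕ) :
    (cycleMatrix d (n + 2)).submatrix Fin.succ Fin.succ = pathMatrix d (n + 1) := by
  ext i j
  simp only [submatrix_apply, cycleMatrix_apply, pathMatrix_apply, Fin.val_succ]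
  exact if_congr (by omega) rfl (if_congr (by omega) rfl rfl)

theorem cycleMatrix_submatrix_add_right (d : R) (n : ℕ) (p : Fin (n + 2)) :
    (cycleMatrix d (n + 2)).submatrix (· + p) (· + p) = cycleMatrix d (n + 2) := by
  ext i j
  simp only [cycleMatrix, submatrix_apply, smul_one_sub_adjMatrix_apply, cycleGraph_adj,
    add_sub_add_right_eq_sub, add_left_inj]

theorem det_cycleMatrix_submatrix_succAbove (d : R) (n : ℕ) (p : Fin (n + 2)) :
    ((cycleMatrix d (n + 2)).submatrix p.succAbove p.succAbove).det =
      (pathMatrix d (n + 1)).det := by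
  -- rotating the rim by `p` moves the deleted vertex `p` to `0`
  have hrange : Set.range (fun a : Fin (n + 1) => a.succ + p) = Set.range p.succAbove := by
    ext x
    simp [← eq_sub_iff_add_eq, Fin.exists_succ_eq, sub_eq_zero]
  rw [det_submatrix_eq_of_range_eq _ Fin.succAbove_right_injective
      ((add_left_injective p).comp (Fin.succ_injective _)) hrange.symm,
    ← submatrix_submatrix, cycleMatrix_submatrix_add_right, cycleMatrix_submatrix_succ]

theorem det_cycleMatrix_submatrix_succ_castSucc (d : R) (n : ℕ) :
    ((cycleMatrix d (n + 3)).submatrix Fin.succ Fin.castSucc).det =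
      (-1) ^ n * (1 + (pathMatrix d (n + 1)).det) := by
  set M := (cycleMatrix d (n + 3)).submatrix Fin.succ Fin.castSucc
  have htri : (M.submatrix Fin.succ Fin.succ).det = (-1) ^ (n + 1) := by
    refine det_eq_pow_of_isUpperTriangular (fun i j hij => ?_) fun i => ?_
    · rw [Fin.lt_def] at hij
      exact cycleMatrix_apply_eq_zero d
        (by simp only [id_eq, Fin.val_succ, Fin.val_castSucc] at hij ⊢; omega)
    · simp [M, cycleMatrix_apply]
  have hpath : M.submatrix Fin.castSucc Fin.succ = pathMatrix d (n + 1) := by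
    ext i j
    simp only [M, submatrix_apply, cycleMatrix_apply, pathMatrix_apply, Fin.val_succ,
      Fin.val_castSucc]
    exact if_congr (by omega) rfl (if_congr (by omega) rfl rfl)
  have hfirst : M 0 0 = -1 := by simp [M, cycleMatrix_apply]
  have hlast : M (Fin.last _) 0 = -1 := by simp [M, cycleMatrix_apply]
  rw [det_succ_column_zero_of_support M {0, Fin.last _} fun i hi => ?_,
    Finset.sum_pair Fin.last_pos.ne, Fin.succAbove_zero, Fin.succAbove_last, htri, hpath,
    hfirst, hlast, Fin.val_zero, Fin.val_last]
  · ring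
  · rcases i with ⟨i, hi'⟩
    simp only [Finset.mem_insert, Finset.mem_singleton, Fin.ext_iff, Fin.val_zero, Fin.val_last]
      at hi
    exact cycleMatrix_apply_eq_zero d
      (by simp only [Fin.val_succ, Fin.val_castSucc, Fin.val_zero]; omega)

theorem det_cycleMatrix_submatrix_succ_succAbove_one (d : R) (n : ℕ) :
    ((cycleMatrix d (n + 3)).submatrix Fin.succ (Fin.succAbove 1)).det =
      -(pathMatrix d (n + 1)).det - 1 := by
  set M := (cycleMatrix d (n + 3)).submatrix Fin.succ (Fin.succAbove 1)
  have hpath : M.submatrix Fin.succ Fin.succ = pathMatrix d (n + 1) := by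
    ext i j
    simp only [M, submatrix_apply, Fin.one_succAbove_succ, cycleMatrix_apply, pathMatrix_apply,
      Fin.val_succ]
    exact if_congr (by omega) rfl (if_congr (by omega) rfl rfl)
  have htri : (M.submatrix Fin.castSucc Fin.succ).det = (-1) ^ (n + 1) := by
    refine det_eq_pow_of_isLowerTriangular (fun i j hij => ?_) fun i => ?_
    · rw [OrderDual.toDual_lt_toDual, Fin.lt_def] at hij
      exact cycleMatrix_apply_eq_zero d
        (by simp only [Fin.one_succAbove_succ, Fin.val_succ, Fin.val_castSucc]; omega)
    · simp [M, cycleMatrix_apply]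
  have hfirst : M 0 0 = -1 := by simp [M, cycleMatrix_apply]
  have hlast : M (Fin.last _) 0 = -1 := by simp [M, cycleMatrix_apply]
  have hpow : (-1 : R) ^ (n + 1) * (-1) ^ (n + 1) = 1 := by rw [← mul_pow]; norm_num
  rw [det_succ_column_zero_of_support M {0, Fin.last _} fun i hi => ?_,
    Finset.sum_pair Fin.last_pos.ne, Fin.succAbove_zero, Fin.succAbove_last, htri, hpath,
    hfirst, hlast, Fin.val_zero, Fin.val_last]
  · linear_combination -hpow
  · rcases i with ⟨i, hi'⟩
    simp only [Finset.mem_insert, Finset.mem_singleton, Fin.ext_iff, Fin.val_zero, Fin.val_last]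
      at hi
    exact cycleMatrix_apply_eq_zero d
      (by simp only [Fin.val_succ, Fin.one_succAbove_zero, Fin.val_zero]; omega)

theorem det_cycleMatrix (d : R) (n : ℕ) :
    (cycleMatrix d (n + 3)).det =
      d * (pathMatrix d (n + 2)).det - 2 * (pathMatrix d (n + 1)).det - 2 := by
  set C := cycleMatrix d (n + 3)
  have hdiag : C 0 0 = d := by simp [C, cycleMatrix_apply]
  have hnext : C 0 1 = -1 := by simp [C, cycleMatrix_apply]
  have hprev : C 0 (Fin.last _) = -1 := by simp [C, cycleMatrix_apply]
  have hpow : (-1 : R) ^ n * (-1) ^ n = 1 := by rw [← mul_pow]; norm_num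
  rw [det_succ_row_zero_of_support C {0, 1, Fin.last _} fun j hj => ?_,
    Finset.sum_insert (by simp [Fin.ext_iff]), Finset.sum_pair (by simp [Fin.ext_iff]),
    Fin.succAbove_zero, Fin.succAbove_last, cycleMatrix_submatrix_succ,
    det_cycleMatrix_submatrix_succ_succAbove_one, det_cycleMatrix_submatrix_succ_castSucc,
    hdiag, hnext, hprev, Fin.val_zero, Fin.val_one, Fin.val_last]
  · linear_combination (-1 - (pathMatrix d (n + 1)).det) * hpow
  · rcases j with ⟨j, hj'⟩
    simp only [Finset.mem_insert, Finset.mem_singleton, Fin.ext_iff, Fin.val_zero, Fin.val_one,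
      Fin.val_last] at hj
    exact cycleMatrix_apply_eq_zero d (by simp only [Fin.val_zero]; omega)

end

theorem wheelAdj_castSucc {m : ℕ} (a b : Fin (m + 3)) :
    wheelAdj (m + 4) a b = true ↔ (cycleGraph (m + 3)).Adj a b := by
  rw [cycleGraph_adj_iff_val]
  simp only [wheelAdj, decide_eq_true_eq]
  omega

theorem card_filter_wheelAdj_rim {m : ℕ} (v : Fin (m + 3)) :
    (Finset.univ.filter fun l : Fin (m + 4) => wheelAdj (m + 4) v l = true).card = 3 := by
  have hhub : wheelAdj (m + 4) v (m + 3) = true := by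
    simp only [wheelAdj, decide_eq_true_eq]
    omega
  rw [Finset.card_filter, Fin.sum_univ_castSucc]
  simp only [Fin.val_castSucc, wheelAdj_castSucc, Fin.val_last, hhub, if_true]
  rw [← Finset.card_filter, ← neighborFinset_eq_filter, card_neighborFinset_eq_degree,
    cycleGraph_degree_three_le]

theorem lapl_wheel_submatrix_castSucc (m : ℕ) :
    (lapl (m + 4) (wheelAdj (m + 4))).submatrix Fin.castSucc Fin.castSucc =
      cycleMatrix 3 (m + 3) := by
  ext a b
  rw [submatrix_apply, lapl, cycleMatrix, smul_one_sub_adjMatrix_apply]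
  by_cases hab : a = b
  · subst hab
    rw [if_pos rfl, if_pos rfl, Fin.val_castSucc, card_filter_wheelAdj_rim]
    norm_num
  · rw [if_neg (Fin.castSucc_injective _ |>.ne hab), if_neg hab]
    exact if_congr (wheelAdj_castSucc a b) rfl rfl

/-- In the wheel graph on `k = m+4` vertices the resistance distance between the
hub `k` and a rim vertex `i ∈ {1, …, k-1}`, computed as
`det(L({i,k}|{i,k}))/det(L(k|k))`, equals `F_{2k-2}²/(F_{4k-4} - 2F_{2k-2})`. -/
theorem stmt12 (m i : ℕ) (h2 : i ≤ m + 3) :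
    let k := m + 4
    let L := lapl k (wheelAdj k)
    let p : Fin (m + 3) := ⟨i - 1, by omega⟩
    (L.submatrix (fun a : Fin (m + 2) => (p.succAbove a).castSucc)
          (fun a : Fin (m + 2) => (p.succAbove a).castSucc)).det /
        (L.submatrix (fun a : Fin (m + 3) => a.castSucc)
          (fun a : Fin (m + 3) => a.castSucc)).det =
      (Nat.fib (2 * k - 2) : ℚ) ^ 2 /
        ((Nat.fib (4 * k - 4) : ℚ) - 2 * (Nat.fib (2 * k - 2) : ℚ)) := by
  intro k L p
  have hrim : L.submatrix Fin.castSucc Fin.castSucc = cycleMatrix 3 (m + 3) :=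
    lapl_wheel_submatrix_castSucc m
  have hnum : (L.submatrix (fun a : Fin (m + 2) => (p.succAbove a).castSucc)
      (fun a => (p.succAbove a).castSucc)).det = Nat.fib (2 * m + 4 + 2) := by
    change ((L.submatrix Fin.castSucc Fin.castSucc).submatrix p.succAbove p.succAbove).det = _
    rw [hrim, det_cycleMatrix_submatrix_succAbove, det_pathMatrix_three]
    ring_nf
  have hden : (L.submatrix Fin.castSucc Fin.castSucc).det =
      3 * Nat.fib (2 * m + 4 + 2) - 2 * Nat.fib (2 * m + 4) - 2 := by
    rw [hrim, det_cycleMatrix, det_pathMatrix_three, det_pathMatrix_three]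
    ring_nf
  rw [hnum, hden, show 2 * k - 2 = 2 * m + 4 + 2 by omega,
    show 4 * k - 4 = 2 * (2 * m + 4 + 2) by omega, Nat.cast_fib_two_mul_add_four]
  have hF : (Nat.fib (2 * m + 4 + 2) : ℚ) ≠ 0 := by exact_mod_cast (Nat.fib_pos.2 (by omega)).ne'
  generalize (Nat.fib (2 * m + 4 + 2) : ℚ) = F at hF ⊢
  rw [sq, show F * (3 * F - 2 * Nat.fib (2 * m + 4)) - 2 * F =
    F * (3 * F - 2 * Nat.fib (2 * m + 4) - 2) by ring, mul_div_mul_left _ _ hF]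
end

section
/- Let d_n = det(L_n(1|1)) where L_n is the Laplacian of the fan graph on n vertices and L(1|1) denotes deleting row and column 1 (vertex 1 being a degree-2 path end). Then d_n = F_{2n-2}, the (2n−2)-nd Fibonacci number, equivalently d_n satisfies d_n = 3d_{n-1} − d_{n-2} for n ≥ 4. -/
/-- Adjacency of the fan graph on `n` vertices (indices `0, …, n-1`): a path on
`0, …, n-2` joined to the hub `n-1`. -/
def fanAdj (n a b : ℕ) : Bool :=
  decide (((a + 1 = b ∨ b + 1 = a) ∧ a < n - 1 ∧ b < n - 1) ∨
    (a = n - 1 ∧ b < n - 1) ∨ (b = n - 1 ∧ a < n - 1))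

/-- Delete the first row and column. -/
def delFirst {n : ℕ} (M : Matrix (Fin n) (Fin n) ℚ) :
    Matrix (Fin (n - 1)) (Fin (n - 1)) ℚ :=
  M.submatrix (fun i => ⟨i.val + 1, by have := i.isLt; omega⟩)
    (fun j => ⟨j.val + 1, by have := j.isLt; omega⟩)
/-!
Since a Laplacian is symmetric with zero row sums, all entries of its adjugate coincide, so
deleting vertex 1 gives the same determinant as deleting the hub. Without the hub one is left
with the tridiagonal matrix with diagonal `2, 3, …, 3, 2` and off-diagonal entries `-1`. The
continuant recurrence `D_{k+2} = d_{k+1} D_{k+1} - D_k` gives `F_{2k+1}` for the diagonal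
`2, 3, 3, …`, and lowering the last entry to `2` gives `2 F_{2m-1} - F_{2m-3} = F_{2m}`.
-/

namespace Matrix

variable {R : Type*} [CommRing R]

section SumRowEqZero

variable {n : Type*} [Fintype n] [DecidableEq n] {A : Matrix n n R}

theorem det_eq_zero_of_sum_row_eq_zero [Nonempty n] (h : ∀ i, ∑ j, A i j = 0) : A.det = 0 := by
  obtain ⟨i⟩ := ‹Nonempty n›
  have hA : A *ᵥ (fun _ => 1) = 0 := funext fun i => by simp [mulVec, dotProduct, h]
  have := congrFun (congrArg (· *ᵥ (fun _ : n => (1 : R))) (adjugate_mul A)) i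
  simpa [← mulVec_mulVec, hA, smul_mulVec, one_mulVec] using this.symm

-- The difference of the two entries is the determinant of a matrix whose rows still sum to zero.
theorem adjugate_apply_eq_of_sum_row_eq_zero (h : ∀ i, ∑ j, A i j = 0) (i k j : n) :
    adjugate A i j = adjugate A k j := by
  have : Nonempty n := ⟨i⟩
  rw [adjugate_apply, adjugate_apply, ← sub_eq_zero,
    show (Pi.single i 1 : n → R) = (Pi.single i 1 - Pi.single k 1) + Pi.single k 1 from
      (sub_add_cancel _ _).symm, det_updateRow_add, add_sub_cancel_right]
  refine det_eq_zero_of_sum_row_eq_zero fun r => ?_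
  by_cases hr : r = j
  · subst hr; simp [Finset.sum_sub_distrib]
  · simp [updateRow_ne hr, h]

theorem adjugate_apply_eq_of_isSymm (hA : A.IsSymm) (h : ∀ i, ∑ j, A i j = 0) (i j k l : n) :
    adjugate A i j = adjugate A k l := by
  have hsymm : ∀ i j, adjugate A i j = adjugate A j i := fun i j => by
    conv_rhs => rw [← hA.eq, ← adjugate_transpose, transpose_apply]
  calc adjugate A i j = adjugate A k j := adjugate_apply_eq_of_sum_row_eq_zero h i k j
    _ = adjugate A j k := hsymm k j
    _ = adjugate A l k := adjugate_apply_eq_of_sum_row_eq_zero h j l k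
    _ = adjugate A k l := hsymm l k

end SumRowEqZero

theorem det_submatrix_succ_eq_det_submatrix_castSucc {m : ℕ}
    {A : Matrix (Fin (m + 1)) (Fin (m + 1)) R} (hA : A.IsSymm) (h : ∀ i, ∑ j, A i j = 0) :
    (A.submatrix Fin.succ Fin.succ).det = (A.submatrix Fin.castSucc Fin.castSucc).det := by
  have := adjugate_apply_eq_of_isSymm hA h 0 0 (Fin.last m) (Fin.last m)
  rwa [adjugate_fin_succ_eq_det_submatrix, adjugate_fin_succ_eq_det_submatrix,
    Fin.succAbove_zero, Fin.succAbove_last, Fin.val_zero, pow_zero, one_mul, Fin.val_last,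
    Even.neg_one_pow ⟨m, rfl⟩, one_mul] at this

def tridiag (k : ℕ) (d : ℕ → R) : Matrix (Fin k) (Fin k) R :=
  of fun i j => if i = j then d i else if (i : ℕ) + 1 = j ∨ (j : ℕ) + 1 = i then -1 else 0

theorem tridiag_congr {k : ℕ} {d e : ℕ → R} (h : ∀ i < k, d i = e i) :
    tridiag k d = tridiag k e := by
  ext i j
  simp [tridiag, h i i.isLt]

theorem tridiag_submatrix_castSucc (k : ℕ) (d : ℕ → R) :
    (tridiag (k + 1) d).submatrix Fin.castSucc Fin.castSucc = tridiag k d := by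
  ext i j
  simp [tridiag]

theorem det_tridiag_submatrix_castSucc_succAbove (k : ℕ) (d : ℕ → R) :
    ((tridiag (k + 2) d).submatrix Fin.castSucc (Fin.last k).castSucc.succAbove).det =
      -(tridiag k d).det := by
  rw [det_succ_column _ (Fin.last k), Fin.sum_univ_castSucc, Finset.sum_eq_zero, zero_add]
  · have hminor : ((tridiag (k + 2) d).submatrix Fin.castSucc
        (Fin.last k).castSucc.succAbove).submatrix (Fin.last k).succAbove
          (Fin.last k).succAbove = tridiag k d := by
      ext i j
      simp [tridiag, Fin.succAbove]
    rw [hminor, ← two_mul, pow_mul]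
    simp [tridiag, Fin.succAbove]
  · intro i _
    have hzero : tridiag (k + 2) d i.castSucc.castSucc (Fin.last (k + 1)) = 0 := by
      simp only [tridiag, of_apply, Fin.ext_iff, Fin.val_last, Fin.val_castSucc]
      split_ifs <;> first | rfl | omega
    rw [submatrix_apply, Fin.succAbove_castSucc_self, Fin.succ_last, hzero, mul_zero, zero_mul]

theorem det_tridiag_add_two (k : ℕ) (d : ℕ → R) :
    (tridiag (k + 2) d).det = d (k + 1) * (tridiag (k + 1) d).det - (tridiag k d).det := by
  rw [det_succ_row _ (Fin.last (k + 1)), Fin.sum_univ_castSucc, Fin.sum_univ_castSucc,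
    Finset.sum_eq_zero, zero_add]
  · have hsub : tridiag (k + 2) d (Fin.last (k + 1)) (Fin.last k).castSucc = -1 := by
      simp [tridiag, Fin.ext_iff]
    have hdiag : tridiag (k + 2) d (Fin.last (k + 1)) (Fin.last (k + 1)) = d (k + 1) := by
      simp [tridiag]
    simp only [Fin.succAbove_last, tridiag_submatrix_castSucc,
      det_tridiag_submatrix_castSucc_succAbove, hsub, hdiag, Fin.val_last, Fin.val_castSucc,
      ← two_mul, pow_mul, pow_succ]
    norm_num
    ring
  · intro i _
    have hzero : tridiag (k + 2) d (Fin.last (k + 1)) i.castSucc.castSucc = 0 := by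
      simp only [tridiag, of_apply, Fin.ext_iff, Fin.val_last, Fin.val_castSucc]
      split_ifs <;> first | rfl | omega
    rw [hzero, mul_zero, zero_mul]

end Matrix

open Matrix

theorem Nat.fib_add_three_add_fib (n : ℕ) : fib (n + 3) + fib n = 2 * fib (n + 2) := by
  have h₀ : fib (n + 2) = fib n + fib (n + 1) := fib_add_two
  have h₁ : fib (n + 3) = fib (n + 1) + fib (n + 2) := fib_add_two
  omega

theorem Nat.fib_add_four_add_fib (n : ℕ) : fib (n + 4) + fib n = 3 * fib (n + 2) := by
  have h₀ : fib (n + 2) = fib n + fib (n + 1) := fib_add_two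
  have h₁ : fib (n + 3) = fib (n + 1) + fib (n + 2) := fib_add_two
  have h₂ : fib (n + 4) = fib (n + 2) + fib (n + 3) := fib_add_two
  omega

theorem det_tridiag_two_three {R : Type*} [CommRing R] (k : ℕ) :
    (tridiag k fun i => if i = 0 then (2 : R) else 3).det = Nat.fib (2 * k + 1) := by
  induction k using Nat.twoStepInduction with
  | zero => simp
  | one => simp [tridiag, Nat.fib_add_two]
  | more k ih₁ ih₂ =>
    rw [det_tridiag_add_two, ih₁, ih₂, if_neg k.succ_ne_zero, sub_eq_iff_eq_add,
      show 2 * (k + 2) + 1 = 2 * k + 1 + 4 by ring,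
      show 2 * (k + 1) + 1 = 2 * k + 1 + 2 by ring]
    exact_mod_cast congrArg (Nat.cast : ℕ → R) (Nat.fib_add_four_add_fib (2 * k + 1)).symm

theorem lapl_isSymm {n : ℕ} {adj : ℕ → ℕ → Bool} (h : ∀ a b, adj a b = adj b a) :
    (lapl n adj).IsSymm := by
  ext i j
  simp only [transpose_apply, lapl, h j i]
  split_ifs <;> simp_all

theorem sum_lapl_row {n : ℕ} {adj : ℕ → ℕ → Bool} (h : ∀ a, adj a a = false)
    (i : Fin n) : ∑ j, lapl n adj i j = 0 := by
  have hentry : ∀ j, lapl n adj i j =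
      (if i = j then ((Finset.univ.filter fun l : Fin n => adj i l = true).card : ℚ) else 0) -
        if adj i j = true then 1 else 0 := by
    intro j
    by_cases hij : i = j
    · subst hij; simp [lapl, h]
    · simp only [lapl, hij, if_false, zero_sub]
      split_ifs <;> simp
  simp [hentry, Finset.sum_sub_distrib, Finset.sum_boole]

theorem fanAdj_comm (n a b : ℕ) : fanAdj n a b = fanAdj n b a := by
  simp only [fanAdj]
  congr 1
  apply propext
  omega

theorem fanAdj_self (n a : ℕ) : fanAdj n a a = false := by
  simp only [fanAdj, decide_eq_false_iff_not]
  omega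

theorem card_fanAdj_filter {m : ℕ} (i : Fin (m + 1)) (hi : (i : ℕ) < m) :
    (Finset.univ.filter fun l : Fin (m + 1) => fanAdj (m + 1) i l = true).card =
      (if 0 < (i : ℕ) then 1 else 0) + (if (i : ℕ) + 1 < m then 1 else 0) + 1 := by
  rw [Finset.card_filter,
    Fin.sum_univ_eq_sum_range (fun l => if fanAdj (m + 1) i l = true then 1 else 0)]
  have hsplit : ∀ l ∈ Finset.range (m + 1), (if fanAdj (m + 1) i l = true then 1 else 0) =
      (if l = (i : ℕ) - 1 then (if 0 < (i : ℕ) then 1 else 0) else 0) +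
      (if l = (i : ℕ) + 1 then (if (i : ℕ) + 1 < m then 1 else 0) else 0) +
      (if l = m then 1 else 0) := by
    intro l hl
    rw [Finset.mem_range] at hl
    simp only [fanAdj, decide_eq_true_eq, Nat.add_sub_cancel]
    split_ifs <;> omega
  rw [Finset.sum_congr rfl hsplit, Finset.sum_add_distrib, Finset.sum_add_distrib,
    Finset.sum_ite_eq', Finset.sum_ite_eq', Finset.sum_ite_eq']
  simp only [Finset.mem_range]
  split_ifs <;> omega

theorem lapl_fanAdj_submatrix_castSucc (m : ℕ) :
    (lapl (m + 1) (fanAdj (m + 1))).submatrix Fin.castSucc Fin.castSucc =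
      tridiag m fun i =>
        (((if 0 < i then 1 else 0) + (if i + 1 < m then 1 else 0) + 1 : ℕ) : ℚ) := by
  ext i j
  by_cases hij : i = j
  · subst hij
    simp only [submatrix_apply, lapl, card_fanAdj_filter i.castSucc i.isLt]
    simp [tridiag]
  · simp only [submatrix_apply, lapl, tridiag, of_apply, Fin.castSucc_inj, hij, if_false,
      fanAdj, Fin.val_castSucc, Nat.add_sub_cancel, decide_eq_true_eq]
    split_ifs <;> first | rfl | omega

theorem det_lapl_fanAdj_submatrix_castSucc (m : ℕ) (hm : 1 ≤ m) :
    ((lapl (m + 1) (fanAdj (m + 1))).submatrix Fin.castSucc Fin.castSucc).det =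
      Nat.fib (2 * m) := by
  rw [lapl_fanAdj_submatrix_castSucc]
  obtain rfl | ⟨k, rfl⟩ : m = 1 ∨ ∃ k, m = k + 2 := by
    rcases m with _ | _ | k <;> simp_all
  · simp [tridiag]
  have hpath : ∀ j ≤ k + 1, tridiag j (fun i =>
      (((if 0 < i then 1 else 0) + (if i + 1 < k + 2 then 1 else 0) + 1 : ℕ) : ℚ)) =
        tridiag j fun i => if i = 0 then 2 else 3 := fun j hj =>
    tridiag_congr fun i hi => by split_ifs <;> first | omega | norm_num
  rw [det_tridiag_add_two, hpath _ le_rfl, hpath _ k.le_succ, det_tridiag_two_three,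
    det_tridiag_two_three]
  have key : (Nat.fib (2 * (k + 2)) + Nat.fib (2 * k + 1) : ℚ) =
      2 * Nat.fib (2 * (k + 1) + 1) := by
    exact_mod_cast Nat.fib_add_three_add_fib (2 * k + 1)
  norm_num
  linear_combination -key

theorem det_delFirst_lapl_fanAdj (n : ℕ) (hn : 2 ≤ n) :
    (delFirst (lapl n (fanAdj n))).det = (Nat.fib (2 * n - 2) : ℚ) := by
  obtain ⟨m, rfl⟩ : ∃ m, n = m + 1 := ⟨n - 1, by omega⟩
  change (Matrix.submatrix _ Fin.succ Fin.succ).det = _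
  rw [det_submatrix_succ_eq_det_submatrix_castSucc (lapl_isSymm (fanAdj_comm _))
    (sum_lapl_row (fanAdj_self _)), det_lapl_fanAdj_submatrix_castSucc m (by omega),
    show 2 * (m + 1) - 2 = 2 * m by omega]

/-- For the fan graph on `n` vertices, `d_n = det(L(1|1))` equals the Fibonacci
number `F_{2n-2}`; equivalently, `d_n = 3d_{n-1} - d_{n-2}` for `n ≥ 4`. -/
theorem stmt13 :
    (∀ n : ℕ, 2 ≤ n →
      (delFirst (lapl n (fanAdj n))).det = (Nat.fib (2 * n - 2) : ℚ)) ∧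
    (∀ n : ℕ, 4 ≤ n →
      (delFirst (lapl n (fanAdj n))).det =
        3 * (delFirst (lapl (n - 1) (fanAdj (n - 1)))).det -
          (delFirst (lapl (n - 2) (fanAdj (n - 2)))).det) := by
  refine ⟨det_delFirst_lapl_fanAdj, fun n hn => ?_⟩
  obtain ⟨c, rfl⟩ : ∃ c, n = c + 4 := ⟨n - 4, by omega⟩
  rw [det_delFirst_lapl_fanAdj _ (by omega), det_delFirst_lapl_fanAdj _ (by omega),
    det_delFirst_lapl_fanAdj _ (by omega), eq_sub_iff_add_eq,
    show 2 * (c + 4) - 2 = 2 * c + 2 + 4 by omega,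
    show 2 * (c + 4 - 1) - 2 = 2 * c + 2 + 2 by omega,
    show 2 * (c + 4 - 2) - 2 = 2 * c + 2 by omega]
  exact_mod_cast Nat.fib_add_four_add_fib (2 * c + 2)
end

section
/- Define R(n) = (C₂·(n−9)·r^{n−2} + C₁·r^{n−2}) / (C₀·r^{n−1}), where r = (2 + √7 + √(4√7+7))/2 and C₀, C₁, C₂ are any nonzero real constants with C₂/C₀ chosen so that C₂/(C₀·r) = 1/14. Then R(n+1) − R(n) = 1/14 for all n. More specifically, with C₂ = C'_{num,2} and C₀ = C'_{den} as given (explicit algebraic numbers), one has C'_{num,2}/(C'_{den}·r) = 1/14, and hence the asymptotic resistance formula for the straight linear 3-tree satisfies R(n+1) − R(n) = 1/14. -/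
/-- The difference identity `R(n+1) - R(n) = 1/14` for
`R(n) = (C₂(n-9)r^{n-2} + C₁r^{n-2})/(C₀ r^{n-1})`, where
`r = (2 + √7 + √(4√7+7))/2` is the dominant root of `X⁴-4X³-X²-4X+1`:
it holds whenever `C₂/(C₀·r) = 1/14`, and in particular for the explicit
algebraic constants `C₂ = C'_{num,2}`, `C₀ = C'_{den}` arising from the
straight linear 3-tree, for which `C'_{num,2}/(C'_{den}·r) = 1/14`. -/
theorem stmt17 :
    let s7 : ℝ := Real.sqrt 7
    let sp : ℝ := Real.sqrt (4 * s7 + 7)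
    let spp : ℝ := Real.sqrt (7 * (4 * s7 + 7))
    let r : ℝ := (2 + s7 + sp) / 2
    let Cnum2 : ℝ :=
      256 * (47540907929 * s7 + 29996455428 * sp + 11337594468 * spp + 125781419483) /
        (49 * (s7 + sp + 2) ^ 9 * (11955 * s7 + 7543 * sp + 2851 * spp + 31629))
    let Cden : ℝ :=
      1024 * (159102007 * s7 + 100387151 * sp + 37942776 * spp + 420944344) /
        (7 * (s7 + sp + 2) ^ 11 * (5 * s7 + 3 * sp + spp + 11))
    -- (a) general form: any nonzero constants with `C₂/(C₀·r) = 1/14`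
    (∀ C0 C1 C2 : ℝ, C0 ≠ 0 → C2 ≠ 0 → C2 / (C0 * r) = 1 / 14 →
      ∀ n : ℕ,
        (C2 * (((n : ℝ) + 1) - 9) * r ^ (((n : ℝ) + 1) - 2) +
              C1 * r ^ (((n : ℝ) + 1) - 2)) /
            (C0 * r ^ (((n : ℝ) + 1) - 1)) -
          (C2 * ((n : ℝ) - 9) * r ^ ((n : ℝ) - 2) + C1 * r ^ ((n : ℝ) - 2)) /
            (C0 * r ^ ((n : ℝ) - 1)) = 1 / 14) ∧
    -- (b) the explicit constants satisfy the normalization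
    Cnum2 / (Cden * r) = 1 / 14 ∧
    -- (c) hence the asymptotic resistance formula gains exactly 1/14 per step
    (∀ Cnum1 : ℝ, ∀ n : ℕ,
      (Cnum2 * (((n : ℝ) + 1) - 9) * r ^ (((n : ℝ) + 1) - 2) +
            Cnum1 * r ^ (((n : ℝ) + 1) - 2)) /
          (Cden * r ^ (((n : ℝ) + 1) - 1)) -
        (Cnum2 * ((n : ℝ) - 9) * r ^ ((n : ℝ) - 2) + Cnum1 * r ^ ((n : ℝ) - 2)) /
          (Cden * r ^ ((n : ℝ) - 1)) = 1 / 14) := by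
  intro s7 sp spp r Cnum2 Cden
  have hs7 : (0:ℝ) ≤ s7 := Real.sqrt_nonneg _
  have hsp : (0:ℝ) ≤ sp := Real.sqrt_nonneg _
  have ha : s7 ^ 2 = 7 := Real.sq_sqrt (by norm_num)
  have hb : sp ^ 2 = 4 * s7 + 7 := Real.sq_sqrt (by positivity)
  have hab : spp = s7 * sp := by
    show Real.sqrt (7 * (4 * s7 + 7)) = s7 * sp
    rw [Real.sqrt_mul (by norm_num : (0:ℝ) ≤ 7)]
  have hr : (0:ℝ) < r := by
    show (0:ℝ) < (2 + s7 + sp) / 2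
    linarith
  -- (a) the general difference computation
  have gen : ∀ C0 C1 C2 : ℝ, C0 ≠ 0 → C2 / (C0 * r) = 1 / 14 →
      ∀ n : ℕ,
        (C2 * (((n : ℝ) + 1) - 9) * r ^ (((n : ℝ) + 1) - 2) +
              C1 * r ^ (((n : ℝ) + 1) - 2)) /
            (C0 * r ^ (((n : ℝ) + 1) - 1)) -
          (C2 * ((n : ℝ) - 9) * r ^ ((n : ℝ) - 2) + C1 * r ^ ((n : ℝ) - 2)) /
            (C0 * r ^ ((n : ℝ) - 1)) = 1 / 14 := by
    intro C0 C1 C2 hC0 hC n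
    have hC' : C2 * 14 = C0 * r := by
      rw [div_eq_div_iff (mul_ne_zero hC0 hr.ne') (by norm_num : (14:ℝ) ≠ 0)] at hC
      linarith
    have e1 : r ^ (((n:ℝ) + 1) - 2) = r ^ ((n:ℝ) - 2) * r := by
      rw [show ((n:ℝ) + 1) - 2 = ((n:ℝ) - 2) + 1 by ring_nf, Real.rpow_add_one hr.ne']
    have e2 : r ^ (((n:ℝ) + 1) - 1) = r ^ ((n:ℝ) - 2) * r * r := by
      rw [show ((n:ℝ) + 1) - 1 = (((n:ℝ) - 2) + 1) + 1 by ring_nf, Real.rpow_add_one hr.ne',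
        Real.rpow_add_one hr.ne']
    have e3 : r ^ ((n:ℝ) - 1) = r ^ ((n:ℝ) - 2) * r := by
      rw [show (n:ℝ) - 1 = ((n:ℝ) - 2) + 1 by ring_nf, Real.rpow_add_one hr.ne']
    rw [e1, e2, e3]
    have ht : (0:ℝ) < r ^ ((n:ℝ) - 2) := Real.rpow_pos_of_pos hr _
    generalize r ^ ((n:ℝ) - 2) = t at ht ⊢
    have h1 : C0 * (t * r * r) ≠ 0 := mul_ne_zero hC0 (by positivity)
    have h2 : C0 * (t * r) ≠ 0 := mul_ne_zero hC0 (by positivity)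
    rw [div_sub_div _ _ h1 h2, div_eq_div_iff (mul_ne_zero h1 h2) (by norm_num : (14:ℝ) ≠ 0)]
    linear_combination (C0 * t ^ 2 * r ^ 2) * hC'
  -- the key cross-multiplied polynomial identity
  have main : (47540907929 * s7 + 29996455428 * sp + 11337594468 * (s7 * sp) + 125781419483)
        * (s7 + sp + 2) * (5 * s7 + 3 * sp + s7 * sp + 11)
      = (159102007 * s7 + 100387151 * sp + 37942776 * (s7 * sp) + 420944344)
        * (11955 * s7 + 7543 * sp + 2851 * (s7 * sp) + 31629) := by
    linear_combination
      ((1376630197518:ℝ) + 417456667308*sp + 648021515565*s7 + 149579258141*s7*sp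
        + 45350377872*s7^2) * ha +
      ((130063720732:ℝ) + 89989366284*sp + 188701676637*s7 + 64009238832*s7*sp
        + 82738453661*s7^2 + 11337594468*s7^2*sp + 11337594468*s7^3) * hb
  have hS : (0:ℝ) < s7 + sp + 2 := by linarith
  have key2 : Cnum2 * 14 = Cden * r := by
    show 256 * (47540907929 * s7 + 29996455428 * sp + 11337594468 * spp + 125781419483) /
        (49 * (s7 + sp + 2) ^ 9 * (11955 * s7 + 7543 * sp + 2851 * spp + 31629)) * 14
      = 1024 * (159102007 * s7 + 100387151 * sp + 37942776 * spp + 420944344) /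
        (7 * (s7 + sp + 2) ^ 11 * (5 * s7 + 3 * sp + spp + 11)) * ((2 + s7 + sp) / 2)
    rw [hab]
    have hd1 : (49:ℝ) * (s7 + sp + 2) ^ 9 * (11955 * s7 + 7543 * sp + 2851 * (s7*sp) + 31629) ≠ 0 := by
      positivity
    have hd2 : (7:ℝ) * (s7 + sp + 2) ^ 11 * (5 * s7 + 3 * sp + (s7*sp) + 11) * 2 ≠ 0 := by
      positivity
    rw [div_mul_eq_mul_div, div_mul_div_comm, div_eq_div_iff hd1 hd2]
    linear_combination (50176 * (s7 + sp + 2) ^ 10) * main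
  have hCden : (0:ℝ) < Cden := by
    show (0:ℝ) < 1024 * (159102007 * s7 + 100387151 * sp + 37942776 * spp + 420944344) /
        (7 * (s7 + sp + 2) ^ 11 * (5 * s7 + 3 * sp + spp + 11))
    rw [hab]
    positivity
  have keyb : Cnum2 / (Cden * r) = 1 / 14 := by
    rw [div_eq_div_iff (mul_ne_zero hCden.ne' hr.ne') (by norm_num : (14:ℝ) ≠ 0)]
    linarith [key2]
  exact ⟨fun C0 C1 C2 hC0 _ hC n => gen C0 C1 C2 hC0 hC n, keyb,
    fun Cnum1 n => gen Cden Cnum1 Cnum2 hCden.ne' keyb n⟩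
end
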